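/- Let q > 1 real, define X_{r,q} = X_r - q^{-1} X_{r-2} (with X_s = 0 for negative s), and let \mu_q be the Kesten-McKay distribution with density (1/(2\pi))(q+1)\sqrt{4-x^2}/((q^{-1/2}+q^{1/2})^2-x^2) on [-2,2]. Then \int X_{n,q} X_{m,q} d\mu_q = 0 if m \ne n, equals 1 if m = n = 0, and equals 1 + q^{-1} if m = n \ge 1. -/

import Mathlib

open MeasureTheory
open scoped Real

/-- The Vieta–Fibonacci polynomials as real functions, defined by the recurrence
`X 0 = 1`, `X 1 = x`, `X (r+2) = x * X (r+1) - X r` (so `X r x = U r (x/2)`). -/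
noncomputable def vietaFibR : ℕ → ℝ → ℝ
  | 0, _ => 1
  | 1, x => x
  | (r + 2), x => x * vietaFibR (r + 1) x - vietaFibR r x

/-- The modified Chebyshev polynomials `X_{r,q} = X_r - q⁻¹ X_{r-2}`
(with the convention `X_s = 0` for negative `s`). -/
noncomputable def vietaFibRq (q : ℝ) (r : ℕ) (x : ℝ) : ℝ :=
  vietaFibR r x - if 2 ≤ r then q⁻¹ * vietaFibR (r - 2) x else 0

/-- The Kesten-McKay distribution with real parameter `q > 1`, given by the density
`(1/(2π))(q+1)√(4-x²)/((q^{-1/2}+q^{1/2})² - x²)` on `[-2,2]`. -/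
noncomputable def kestenMcKay (q : ℝ) : Measure ℝ :=
  volume.withDensity fun x =>
    ENNReal.ofReal (if x ∈ Set.Icc (-2 : ℝ) 2 then
      (1 / (2 * π)) * ((q + 1) * Real.sqrt (4 - x ^ 2)) /
        (((Real.sqrt q)⁻¹ + Real.sqrt q) ^ 2 - x ^ 2) else 0)

/-!
With `X_r = S_r` (Mathlib's rescaled Chebyshev polynomials of the second kind) and
`X_{n,q} = S_n - q⁻¹ S_{n-2}` for `n ≥ 1`, the linearization `S_a S_b = ∑_{k ≤ b} S_{a-b+2k}`
reduces every integral `∫ X_{n,q} X_m dμ_q`, `m ≤ n`, to a sum of the values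
`E_j = ∫ (S_j - q⁻¹ S_{j-2}) dμ_q`, `j ≥ 0`, of which only `E_0 = 1 + q⁻¹` survives (`j = 0`
occurs only for `m = n`). Expanding `X_{m,q}` once more gives the theorem.

The moments are computed through the semicircle: `((q + 1)² - q x²) dμ_q` is a multiple of
`√(4 - x²) dx`, against which `S_j`, `j ≥ 1`, integrates to zero because
`2 (1 - y²) U_j(y) = T_j(y) - T_{j+2}(y)` and the `T_j` are orthogonal for `dy / √(1 - y²)`.
Multiplying by `x²` therefore gives `E_{j+2} = q E_j - [j = 0] (q + 1)`, and everything follows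
from the total mass `μ_q [-2, 2] = 1` (an explicit arcsine antiderivative) and the vanishing of the
first moment by symmetry.
-/

open Polynomial Polynomial.Chebyshev Set

namespace Polynomial.Chebyshev

variable (R : Type*) [CommRing R]

theorem S_mul_S (a : ℤ) (b : ℕ) :
    S R a * S R b = ∑ k ∈ Finset.range (b + 1), S R (a - b + 2 * k) := by
  induction b using Nat.twoStepInduction generalizing a with
  | zero => simp
  | one =>
    simp only [Finset.sum_range_succ, Finset.range_one, Finset.sum_singleton]
    push_cast
    rw [S_one]
    linear_combination (norm := ring_nf) -S_add_one R a
  | more b ih₀ ih₁ =>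
    have hsucc := ih₁ (a + 1)
    have hpred := ih₁ (a - 1)
    have hself := ih₀ a
    rw [Finset.sum_range_succ] at hsucc
    rw [Finset.sum_range_succ]
    push_cast at *
    linear_combination (norm := ring_nf) hsucc + hpred - hself + S R a * S_add_two R b
      - S R (b + 1) * S_add_one R a

theorem X_sq_mul_S (n : ℤ) : X ^ 2 * S R n = S R (n + 2) + 2 * S R n + S R (n - 2) := by
  linear_combination (norm := ring_nf) -X * S_add_one R n - S_add_two R n - S_sub_two R n

theorem two_mul_one_sub_X_sq_mul_U (n : ℤ) :
    2 * (1 - X ^ 2) * U R n = T R n - T R (n + 2) := by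
  linear_combination (norm := ring_nf) 2 * one_sub_X_sq_mul_U_eq_pol_in_T R n - T_add_two R n

theorem integral_eval_S_mul_sqrt_four_sub_sq (j : ℤ) :
    ∫ x in (-2 : ℝ)..2, (S ℝ j).eval x * √(4 - x ^ 2) =
      2 * ∫ y, (T ℝ j - T ℝ (j + 2)).eval y ∂measureT := by
  have hpt (y : ℝ) : (S ℝ j).eval (2 * y) * √(4 - (2 * y) ^ 2) =
      (T ℝ j - T ℝ (j + 2)).eval y * √(1 - y ^ 2)⁻¹ := by
    have hU : (S ℝ j).eval (2 * y) = (U ℝ j).eval y := by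
      simpa using congrArg (eval y) (S_comp_two_mul_X ℝ j)
    have hsqrt : √(4 - (2 * y) ^ 2) = 2 * √(1 - y ^ 2) := by
      rw [show 4 - (2 * y) ^ 2 = 2 ^ 2 * (1 - y ^ 2) by ring, Real.sqrt_mul (by norm_num),
        Real.sqrt_sq (by norm_num)]
    rw [hU, hsqrt, ← two_mul_one_sub_X_sq_mul_U, Real.sqrt_inv]
    -- `√a = a / √a` for every real `a`: both sides vanish when `a ≤ 0`.
    nth_rw 1 [← Real.div_sqrt (x := 1 - y ^ 2)]
    simp only [eval_mul, eval_sub, eval_one, eval_pow, eval_X, eval_ofNat]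
    ring
  have hscale := intervalIntegral.integral_comp_mul_left
    (fun x => (S ℝ j).eval x * √(4 - x ^ 2)) (a := -1) (b := 1) (two_ne_zero (α := ℝ))
  simp only [hpt, smul_eq_mul, mul_neg, mul_one] at hscale
  rw [integral_measureT, hscale, mul_inv_cancel_left₀ two_ne_zero]

theorem integral_eval_S_mul_sqrt_four_sub_sq_of_nonneg {j : ℤ} (hj : 0 ≤ j) :
    ∫ x in (-2 : ℝ)..2, (S ℝ j).eval x * √(4 - x ^ 2) = if j = 0 then 2 * π else 0 := by
  have hT (n : ℤ) : Integrable (fun y => (T ℝ n).eval y) measureT :=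
    integrable_measureT (Polynomial.continuous _).continuousOn
  rw [integral_eval_S_mul_sqrt_four_sub_sq]
  simp only [eval_sub]
  rw [integral_sub (hT _) (hT _), integral_eval_T_real_measureT_of_ne_zero (n := j + 2) (by omega)]
  split_ifs with h
  · rw [h, integral_eval_T_real_measureT_zero]
    ring
  · rw [integral_eval_T_real_measureT_of_ne_zero h]
    ring

end Polynomial.Chebyshev

theorem vietaFibR_eq_eval_S (r : ℕ) (x : ℝ) : vietaFibR r x = (S ℝ r).eval x := by
  induction r using Nat.twoStepInduction with
  | zero => simp [vietaFibR]
  | one => simp [vietaFibR]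
  | more r ih₀ ih₁ =>
    rw [vietaFibR, ih₀, ih₁, show ((r + 2 : ℕ) : ℤ) = r + 2 by push_cast; ring, S_add_two]
    simp

theorem vietaFibRq_eq_eval_S {r : ℕ} (hr : r ≠ 0) (q x : ℝ) :
    vietaFibRq q r x = (S ℝ r).eval x - q⁻¹ * (S ℝ (r - 2)).eval x := by
  rw [vietaFibRq, vietaFibR_eq_eval_S]
  split_ifs with h
  · rw [vietaFibR_eq_eval_S, Nat.cast_sub h, Nat.cast_ofNat]
  · obtain rfl : r = 1 := by omega
    simp

theorem continuous_vietaFibR (r : ℕ) : Continuous (vietaFibR r) := by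
  simpa only [← funext (vietaFibR_eq_eval_S r)] using (S ℝ r).continuous

theorem continuous_vietaFibRq (q : ℝ) (r : ℕ) : Continuous (vietaFibRq q r) := by
  unfold vietaFibRq
  split_ifs
  · exact (continuous_vietaFibR r).sub (continuous_const.mul (continuous_vietaFibR (r - 2)))
  · exact (continuous_vietaFibR r).sub continuous_const

noncomputable def kmDensity (q x : ℝ) : ℝ :=
  q * (q + 1) * √(4 - x ^ 2) / (2 * π * ((q + 1) ^ 2 - q * x ^ 2))

section KestenMcKay

variable {q : ℝ}

theorem add_one_sq_sub_mul_sq_pos (hq : 1 < q) {x : ℝ} (hx : x ∈ Icc (-2 : ℝ) 2) :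
    0 < (q + 1) ^ 2 - q * x ^ 2 := by
  have : x ^ 2 ≤ 4 := by nlinarith [hx.1, hx.2]
  nlinarith

theorem kmDensity_nonneg (hq : 0 < q) {x : ℝ} (hx : x ∈ Icc (-2 : ℝ) 2) :
    0 ≤ kmDensity q x := by
  have : x ^ 2 ≤ 4 := by nlinarith [hx.1, hx.2]
  unfold kmDensity
  have : 0 ≤ (q + 1) ^ 2 - q * x ^ 2 := by nlinarith [sq_nonneg (q - 1)]
  positivity

theorem kmDensity_neg (x : ℝ) : kmDensity q (-x) = kmDensity q x := by
  simp [kmDensity]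

theorem continuousOn_kmDensity (hq : 1 < q) : ContinuousOn (kmDensity q) (Icc (-2) 2) := by
  unfold kmDensity
  exact ContinuousOn.div (by fun_prop) (by fun_prop)
    fun x hx => mul_ne_zero (by positivity) (add_one_sq_sub_mul_sq_pos hq hx).ne'

theorem intervalIntegrable_mul_kmDensity (hq : 1 < q) {f : ℝ → ℝ} (hf : Continuous f) :
    IntervalIntegrable (fun x => f x * kmDensity q x) volume (-2) 2 :=
  (hf.continuousOn.mul (continuousOn_kmDensity hq)).intervalIntegrable_of_Icc (by norm_num)

theorem kmDensity_eq (hq : 0 < q) (x : ℝ) :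
    1 / (2 * π) * ((q + 1) * √(4 - x ^ 2)) / (((√q)⁻¹ + √q) ^ 2 - x ^ 2) =
      kmDensity q x := by
  have hsq : ((√q)⁻¹ + √q) ^ 2 - x ^ 2 = ((q + 1) ^ 2 - q * x ^ 2) / q := by
    have h := Real.sq_sqrt hq.le
    field_simp
    rw [h]
    ring
  rw [hsq, kmDensity, div_div_eq_mul_div]
  simp only [div_eq_mul_inv, mul_inv]
  ring

theorem integral_kestenMcKay (hq : 0 < q) (f : ℝ → ℝ) :
    ∫ x, f x ∂kestenMcKay q = ∫ x in (-2 : ℝ)..2, f x * kmDensity q x := by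
  have hmeas : Measurable (indicator (Icc (-2 : ℝ) 2) (kmDensity q)) :=
    (Measurable.indicator (by unfold kmDensity; fun_prop) measurableSet_Icc)
  have hdens : (fun x => ENNReal.ofReal (if x ∈ Icc (-2 : ℝ) 2 then
      1 / (2 * π) * ((q + 1) * √(4 - x ^ 2)) / (((√q)⁻¹ + √q) ^ 2 - x ^ 2) else 0)) =
      fun x => ENNReal.ofReal (indicator (Icc (-2 : ℝ) 2) (kmDensity q) x) := by
    simp only [kmDensity_eq hq, indicator_apply]
  rw [kestenMcKay, hdens, integral_withDensity_eq_integral_toReal_smul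
    hmeas.ennreal_ofReal (by simp)]
  have hpt (x : ℝ) : max (indicator (Icc (-2 : ℝ) 2) (kmDensity q) x) 0 * f x =
      indicator (Icc (-2 : ℝ) 2) (fun x => f x * kmDensity q x) x := by
    by_cases hx : x ∈ Icc (-2 : ℝ) 2
    · simp [hx, kmDensity_nonneg hq hx, mul_comm]
    · simp [hx]
  simp only [ENNReal.toReal_ofReal', smul_eq_mul, hpt]
  rw [MeasureTheory.integral_indicator measurableSet_Icc, integral_Icc_eq_integral_Ioc,
    ← intervalIntegral.integral_of_le (by norm_num)]

/-- Indexed through `S` on `ℤ`, where `S (-1) = 0` but `S (-2) = -1` (whereas `vietaFibRq` treats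
`X_{-2}` as `0`): this is where the value `1 + q⁻¹` of `kmMoment_sub_inv_mul_kmMoment` at `j = 0`
comes from. -/
noncomputable def kmMoment (q : ℝ) (j : ℤ) : ℝ :=
  ∫ x in (-2 : ℝ)..2, (S ℝ j).eval x * kmDensity q x

noncomputable def kmRatio (q y : ℝ) : ℝ :=
  (q - 1) * y / (2 * √((q + 1) ^ 2 - q * y ^ 2))

/-- On `(-2, 2)` the second `arcsin` equals `arctan ((q - 1) * x / ((q + 1) * √(4 - x ^ 2)))`;
written this way the antiderivative stays continuous up to `x = ±2`, where `kmRatio q (±2) = ±1`,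
and no improper limits are needed. -/
noncomputable def kmPrimitive (q y : ℝ) : ℝ :=
  ((q + 1) * Real.arcsin (y / 2) - (q - 1) * Real.arcsin (kmRatio q y)) / (2 * π)

theorem hasDerivAt_arcsin_kmRatio (hq : 1 < q) {x : ℝ} (hx : x ∈ Ioo (-2 : ℝ) 2) :
    HasDerivAt (fun y => Real.arcsin (kmRatio q y))
      ((q - 1) * (q + 1) / (√(4 - x ^ 2) * ((q + 1) ^ 2 - q * x ^ 2))) x := by
  have hD : 0 < (q + 1) ^ 2 - q * x ^ 2 := add_one_sq_sub_mul_sq_pos hq (Ioo_subset_Icc_self hx)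
  have hx4 : 0 < 4 - x ^ 2 := by nlinarith [hx.1, hx.2]
  have hr := Real.sq_sqrt hD.le
  have hs := Real.sq_sqrt hx4.le
  have hratio : HasDerivAt (kmRatio q)
      ((q - 1) * (q + 1) ^ 2 / (2 * √((q + 1) ^ 2 - q * x ^ 2) ^ 3)) x := by
    have hinner : HasDerivAt (fun y => (q + 1) ^ 2 - q * y ^ 2) (-(q * (2 * x))) x := by
      simpa using ((hasDerivAt_pow 2 x).const_mul q).const_sub ((q + 1) ^ 2)
    refine (((hasDerivAt_id' x).const_mul (q - 1)).div ((hinner.sqrt hD.ne').const_mul 2)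
      (by positivity)).congr_deriv ?_
    field_simp
    linear_combination (q - 1) * hr
  have hcos : 1 - kmRatio q x ^ 2 =
      ((q + 1) * √(4 - x ^ 2) / (2 * √((q + 1) ^ 2 - q * x ^ 2))) ^ 2 := by
    rw [kmRatio]
    field_simp
    rw [hr, hs]
    ring
  have hlt : kmRatio q x ^ 2 < 1 := by
    have : 0 < ((q + 1) * √(4 - x ^ 2) / (2 * √((q + 1) ^ 2 - q * x ^ 2))) ^ 2 := by positivity
    linarith
  have harcsin := (Real.hasDerivAt_arcsin (by nlinarith) (by nlinarith)).comp x hratio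
  rw [hcos, Real.sqrt_sq (by positivity)] at harcsin
  refine harcsin.congr_deriv ?_
  field_simp
  linear_combination (1 - q) * hr

theorem hasDerivAt_kmPrimitive (hq : 1 < q) {x : ℝ} (hx : x ∈ Ioo (-2 : ℝ) 2) :
    HasDerivAt (kmPrimitive q) (kmDensity q x) x := by
  have hD := add_one_sq_sub_mul_sq_pos hq (Ioo_subset_Icc_self hx)
  have hx4 : 0 < 4 - x ^ 2 := by nlinarith [hx.1, hx.2]
  have hs := Real.sq_sqrt hx4.le
  have hhalf : √(1 - (x / 2) ^ 2) = √(4 - x ^ 2) / 2 := by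
    rw [show 1 - (x / 2) ^ 2 = (√(4 - x ^ 2) / 2) ^ 2 by linear_combination -hs / 4,
      Real.sqrt_sq (by positivity)]
  have harcsin := (Real.hasDerivAt_arcsin (by linarith [hx.1]) (by linarith [hx.2])).comp x
    ((hasDerivAt_id' x).div_const 2)
  rw [hhalf] at harcsin
  refine (((harcsin.const_mul (q + 1)).sub
    ((hasDerivAt_arcsin_kmRatio hq hx).const_mul (q - 1))).div_const (2 * π)).congr_deriv ?_
  unfold kmDensity
  field_simp
  linear_combination (-q) * hs

theorem continuousOn_kmPrimitive (hq : 1 < q) : ContinuousOn (kmPrimitive q) (Icc (-2) 2) := by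
  have hratio : ContinuousOn (kmRatio q) (Icc (-2) 2) :=
    ContinuousOn.div (by fun_prop) (by fun_prop)
      fun y hy => by have := add_one_sq_sub_mul_sq_pos hq hy; positivity
  exact (ContinuousOn.sub (by fun_prop)
    ((continuous_const.mul Real.continuous_arcsin).comp_continuousOn hratio)).div_const _

theorem kmMoment_zero (hq : 1 < q) : kmMoment q 0 = 1 := by
  have hq1 : q - 1 ≠ 0 := by linarith
  have hright : kmRatio q 2 = 1 := by
    rw [kmRatio, show (q + 1) ^ 2 - q * 2 ^ 2 = (q - 1) ^ 2 by ring, Real.sqrt_sq (by linarith)]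
    field_simp
  have hleft : kmRatio q (-2) = -1 := by
    rw [kmRatio, neg_sq, ← neg_one_mul, mul_left_comm, mul_div_assoc, ← kmRatio, hright,
      mul_one]
  rw [kmMoment, S_zero, intervalIntegral.integral_eq_sub_of_hasDerivAt_of_le (by norm_num)
    (continuousOn_kmPrimitive hq) (fun x hx => by simpa using hasDerivAt_kmPrimitive hq hx)
    (by simpa using intervalIntegrable_mul_kmDensity hq (f := fun _ => 1) continuous_const),
    kmPrimitive, kmPrimitive, hright, hleft]
  field_simp
  rw [Real.arcsin_one, Real.arcsin_neg_one]
  ring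

theorem kmMoment_one : kmMoment q 1 = 0 := by
  have h := intervalIntegral.integral_comp_neg (a := (-2 : ℝ)) (b := 2)
    (fun x => (S ℝ 1).eval x * kmDensity q x)
  simp only [S_one, eval_X, kmDensity_neg, neg_mul, intervalIntegral.integral_neg, neg_neg] at h
  rw [kmMoment, S_one]
  simp only [eval_X]
  linarith

theorem sq_mul_kmDensity (hq : 1 < q) {x : ℝ} (hx : x ∈ Icc (-2 : ℝ) 2) :
    x ^ 2 * kmDensity q x =
      (q + 1) ^ 2 / q * kmDensity q x - (q + 1) / (2 * π) * √(4 - x ^ 2) := by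
  have hD := (add_one_sq_sub_mul_sq_pos hq hx).ne'
  have hq0 : q ≠ 0 := by positivity
  have hw : kmDensity q x * ((q + 1) ^ 2 - q * x ^ 2) =
      q * (q + 1) / (2 * π) * √(4 - x ^ 2) := by
    unfold kmDensity
    field_simp
  linear_combination (norm := (field_simp; ring)) (-q⁻¹) * hw

theorem kmMoment_add_two_add (hq : 1 < q) {j : ℤ} (hj : 0 ≤ j) :
    kmMoment q (j + 2) + 2 * kmMoment q j + kmMoment q (j - 2) =
      (q + 1) ^ 2 / q * kmMoment q j - if j = 0 then q + 1 else 0 := by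
  have hint (n : ℤ) := intervalIntegrable_mul_kmDensity hq (S ℝ n).continuous
  have hsemi : IntervalIntegrable (fun x => (S ℝ j).eval x * √(4 - x ^ 2)) volume (-2) 2 :=
    (by fun_prop : Continuous fun x => (S ℝ j).eval x * √(4 - x ^ 2)).intervalIntegrable _ _
  have hpt : EqOn (fun x => x ^ 2 * (S ℝ j).eval x * kmDensity q x)
      (fun x => (q + 1) ^ 2 / q * ((S ℝ j).eval x * kmDensity q x) -
        (q + 1) / (2 * π) * ((S ℝ j).eval x * √(4 - x ^ 2))) (uIcc (-2) 2) := by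
    intro x hx
    rw [uIcc_of_le (by norm_num)] at hx
    simp only [mul_right_comm _ ((S ℝ j).eval x), sq_mul_kmDensity hq hx]
    ring
  have hsum : ∀ x, x ^ 2 * (S ℝ j).eval x * kmDensity q x =
      (S ℝ (j + 2)).eval x * kmDensity q x + 2 * ((S ℝ j).eval x * kmDensity q x) +
        (S ℝ (j - 2)).eval x * kmDensity q x := by
    intro x
    have := congrArg (eval x) (X_sq_mul_S ℝ j)
    simp only [eval_mul, eval_add, eval_pow, eval_X, eval_ofNat] at this
    rw [this]
    ring
  calc kmMoment q (j + 2) + 2 * kmMoment q j + kmMoment q (j - 2)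
      = ∫ x in (-2 : ℝ)..2, x ^ 2 * (S ℝ j).eval x * kmDensity q x := by
        simp only [hsum]
        rw [intervalIntegral.integral_add ((hint _).add ((hint _).const_mul 2)) (hint _),
          intervalIntegral.integral_add (hint _) ((hint _).const_mul 2),
          intervalIntegral.integral_const_mul, kmMoment, kmMoment, kmMoment]
    _ = ∫ x in (-2 : ℝ)..2, ((q + 1) ^ 2 / q * ((S ℝ j).eval x * kmDensity q x) -
          (q + 1) / (2 * π) * ((S ℝ j).eval x * √(4 - x ^ 2))) :=
        intervalIntegral.integral_congr hpt
    _ = (q + 1) ^ 2 / q * kmMoment q j - if j = 0 then q + 1 else 0 := by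
        rw [intervalIntegral.integral_sub ((hint _).const_mul _) (hsemi.const_mul _),
          intervalIntegral.integral_const_mul, intervalIntegral.integral_const_mul,
          integral_eval_S_mul_sqrt_four_sub_sq_of_nonneg hj, kmMoment]
        split_ifs
        · field_simp
        · ring

theorem kmMoment_sub_inv_mul_kmMoment (hq : 1 < q) (j : ℕ) :
    kmMoment q j - q⁻¹ * kmMoment q (j - 2) = if j = 0 then 1 + q⁻¹ else 0 := by
  induction j using Nat.twoStepInduction with
  | zero =>
    have h : kmMoment q (-2) = -kmMoment q 0 := by
      simp [kmMoment, intervalIntegral.integral_neg]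
    simp [h, kmMoment_zero hq]
  | one => simpa [kmMoment] using kmMoment_one (q := q)
  | more j ih₀ _ =>
    have hrec := kmMoment_add_two_add hq (Int.natCast_nonneg j)
    have hq0 : q ≠ 0 := by positivity
    push_cast
    rw [add_sub_cancel_right]
    simp only [Nat.cast_eq_zero] at hrec
    split_ifs at ih₀ hrec <;>
      linear_combination (norm := (field_simp; ring)) hrec + q * ih₀

theorem integral_vietaFibRq_mul_vietaFibR_mul_kmDensity (hq : 1 < q) {m n : ℕ} (hn : n ≠ 0)
    (hmn : m ≤ n) :
    ∫ x in (-2 : ℝ)..2, vietaFibRq q n x * vietaFibR m x * kmDensity q x =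
      if m = n then 1 + q⁻¹ else 0 := by
  have hint (j : ℤ) := intervalIntegrable_mul_kmDensity hq (S ℝ j).continuous
  have hmoment (j : ℕ) : ∫ x in (-2 : ℝ)..2, ((S ℝ j).eval x * kmDensity q x -
      q⁻¹ * ((S ℝ (j - 2)).eval x * kmDensity q x)) = if j = 0 then 1 + q⁻¹ else 0 := by
    rw [intervalIntegral.integral_sub (hint _) ((hint _).const_mul _),
      intervalIntegral.integral_const_mul]
    exact kmMoment_sub_inv_mul_kmMoment hq j
  have hlin (x : ℝ) : vietaFibRq q n x * vietaFibR m x * kmDensity q x =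
      ∑ k ∈ Finset.range (m + 1), ((S ℝ (n - m + 2 * k : ℕ)).eval x * kmDensity q x -
        q⁻¹ * ((S ℝ ((n - m + 2 * k : ℕ) - 2)).eval x * kmDensity q x)) := by
    have hprod (a : ℤ) := congrArg (eval x) (S_mul_S ℝ a m)
    simp only [eval_mul, eval_finsetSum] at hprod
    rw [vietaFibRq_eq_eval_S hn, vietaFibR_eq_eval_S, sub_mul, hprod, mul_assoc, hprod,
      Finset.mul_sum, ← Finset.sum_sub_distrib, Finset.sum_mul]
    refine Finset.sum_congr rfl fun k _ => ?_
    push_cast [Nat.cast_sub hmn]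
    ring_nf
  rw [intervalIntegral.integral_congr fun x _ => hlin x,
    intervalIntegral.integral_finsetSum fun k _ => (hint _).sub ((hint _).const_mul _)]
  simp only [hmoment]
  rw [Finset.sum_eq_single 0 (fun k _ hk => if_neg (show n - m + 2 * k ≠ 0 by omega)) (by simp)]
  split_ifs <;> first | rfl | omega

theorem integral_vietaFibRq_mul_vietaFibRq_mul_kmDensity (hq : 1 < q) {m n : ℕ} (hmn : m ≤ n) :
    ∫ x in (-2 : ℝ)..2, vietaFibRq q n x * vietaFibRq q m x * kmDensity q x =
      if m = n then (if m = 0 then 1 else 1 + q⁻¹) else 0 := by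
  rcases eq_or_ne n 0 with rfl | hn
  · obtain rfl : m = 0 := by omega
    simpa [vietaFibRq, vietaFibR, kmMoment] using kmMoment_zero hq
  have hsplit (x : ℝ) : vietaFibRq q n x * vietaFibRq q m x * kmDensity q x =
      vietaFibRq q n x * vietaFibR m x * kmDensity q x -
        (if 2 ≤ m then q⁻¹ else 0) * (vietaFibRq q n x * vietaFibR (m - 2) x * kmDensity q x) := by
    have hm : vietaFibRq q m x =
        vietaFibR m x - (if 2 ≤ m then q⁻¹ else 0) * vietaFibR (m - 2) x := by
      rw [vietaFibRq]
      split_ifs <;> ring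
    rw [hm]
    ring
  have hint (r : ℕ) := intervalIntegrable_mul_kmDensity hq
    (f := fun x => vietaFibRq q n x * vietaFibR r x)
    ((continuous_vietaFibRq q n).mul (continuous_vietaFibR r))
  rw [intervalIntegral.integral_congr fun x _ => hsplit x,
    intervalIntegral.integral_sub (hint m) ((hint _).const_mul _),
    intervalIntegral.integral_const_mul,
    integral_vietaFibRq_mul_vietaFibR_mul_kmDensity hq hn hmn,
    integral_vietaFibRq_mul_vietaFibR_mul_kmDensity hq hn (by omega)]
  split_ifs <;> first | omega | ring

end KestenMcKay

theorem vietaFibq_orthogonal_kestenMcKay (q : ℝ) (hq : 1 < q) (m n : ℕ) :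
    ∫ x, vietaFibRq q n x * vietaFibRq q m x ∂kestenMcKay q =
      if m = n then (if m = 0 then 1 else 1 + q⁻¹) else 0 := by
  wlog hmn : m ≤ n generalizing m n
  · simp_rw [mul_comm (vietaFibRq q n _)]
    rw [this n m (by omega)]
    split_ifs <;> first | rfl | omega
  rw [integral_kestenMcKay (by positivity)]
  exact integral_vietaFibRq_mul_vietaFibRq_mul_kmDensity hq hmn
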